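/- Let B be a real p×q matrix and n ≥ 1. Suppose x ∈ ℝ^p and y ∈ ℝ^q are not both zero and λ ∈ ℝ is such that C · v = λ · v, where v is the vector indexed by Fin p ⊕ (Fin n × Fin q) with v(inl i) = x i and v(inr (k,j)) = y j for all k. Then n − 1 − λ is an eigenvalue of D; specifically, the nonzero vector w indexed by Fin q ⊕ (Fin n × Fin p) with w(inl j) = y j and w(inr (k,i)) = −x i / n satisfies D · w = (n − 1 − λ) · w. -/

import Mathlib

open Matrix

/-- The matrix `C` of Construction III: indexed by `Fin p ⊕ (Fin n × Fin q)`,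
first block row `[0, B, …, B]`, and the `n×n` grid of `q×q` blocks has zero diagonal blocks
and identity blocks `I_q` off the diagonal. -/
def matC3 (p q n : ℕ) (B : Matrix (Fin p) (Fin q) ℝ) :
    Matrix (Fin p ⊕ Fin n × Fin q) (Fin p ⊕ Fin n × Fin q) ℝ :=
  Matrix.of fun a b =>
    match a, b with
    | Sum.inl i, Sum.inr (_, j) => B i j
    | Sum.inr (_, j), Sum.inl i => B i j
    | Sum.inr (k, j), Sum.inr (k', j') => if k ≠ k' ∧ j = j' then 1 else 0
    | _, _ => 0

/-- The matrix `D` of Construction III: indexed by `Fin q ⊕ (Fin n × Fin p)`,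
first block row `[0, Bᵀ, …, Bᵀ]`, and the `n×n` grid of `p×p` blocks has zero diagonal blocks
and identity blocks `I_p` off the diagonal. -/
def matD3 (p q n : ℕ) (B : Matrix (Fin p) (Fin q) ℝ) :
    Matrix (Fin q ⊕ Fin n × Fin p) (Fin q ⊕ Fin n × Fin p) ℝ :=
  Matrix.of fun a b =>
    match a, b with
    | Sum.inl j, Sum.inr (_, i) => B i j
    | Sum.inr (_, i), Sum.inl j => B i j
    | Sum.inr (k, i), Sum.inr (k', i') => if k ≠ k' ∧ i = i' then 1 else 0
    | _, _ => 0

/-!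
On block-constant vectors `(x, y, …, y)` the matrix `C` acts as the `2 × 2` block matrix
`[[0, n B], [Bᵀ, (n - 1) I]]`, so the eigen-equation for `C` reads `n B y = λ x` and
`Bᵀ x + (n - 1) y = λ y`. Since `D` is the same construction applied to `Bᵀ`, the vector
`(y, -x/n, …, -x/n)` is an eigenvector of `D` exactly when `-Bᵀ x = (n - 1 - λ) y` and
`B y - (n - 1) x / n = -(n - 1 - λ) x / n`, which are rearrangements of the two equations above.
-/

theorem matD3_eq_matC3_transpose (p q n : ℕ) (B : Matrix (Fin p) (Fin q) ℝ) :
    matD3 p q n B = matC3 q p n Bᵀ := by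
  ext (j | ⟨k, i⟩) (j' | ⟨k', i'⟩) <;> rfl

theorem sum_ite_eq_zero_else_const {ι : Type*} [Fintype ι] [DecidableEq ι] (k : ι) (a : ℝ) :
    ∑ k', (if k = k' then 0 else a) = (Fintype.card ι - 1) * a := by
  have : Nonempty ι := ⟨k⟩
  simp [Finset.sum_ite, Finset.filter_ne, Nat.cast_pred Fintype.card_pos]

section
variable {p q n : ℕ} (B : Matrix (Fin p) (Fin q) ℝ) (x : Fin p → ℝ) (y : Fin q → ℝ)

theorem matC3_mulVec_inl (i : Fin p) :
    (matC3 p q n B *ᵥ Sum.elim x (fun kj => y kj.2)) (Sum.inl i) = n * (B *ᵥ y) i := by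
  simp [matC3, mulVec, dotProduct, Fintype.sum_prod_type, Finset.mul_sum]

theorem matC3_mulVec_inr (k : Fin n) (j : Fin q) :
    (matC3 p q n B *ᵥ Sum.elim x (fun kj => y kj.2)) (Sum.inr (k, j)) =
      (Bᵀ *ᵥ x) j + (n - 1) * y j := by
  simp only [mulVec, dotProduct, matC3, ne_eq, ite_and, ite_not, of_apply, Fintype.sum_sum_type,
    Sum.elim_inl, Sum.elim_inr, ite_mul, zero_mul, one_mul, Fintype.sum_prod_type,
    Finset.sum_ite_irrel, Finset.sum_const_zero, Finset.sum_ite_eq, Finset.mem_univ, ↓reduceIte,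
    transpose_apply, add_right_inj]
  rw [sum_ite_eq_zero_else_const, Fintype.card_fin]

theorem matC3_mulVec_eq_smul_iff (hn : 0 < n) (l : ℝ) :
    matC3 p q n B *ᵥ Sum.elim x (fun kj => y kj.2) = l • Sum.elim x (fun kj => y kj.2) ↔
      (n : ℝ) • (B *ᵥ y) = l • x ∧ Bᵀ *ᵥ x + ((n : ℝ) - 1) • y = l • y := by
  constructor
  · intro h
    refine ⟨funext fun i => ?_, funext fun j => ?_⟩
    · simpa [matC3_mulVec_inl] using congrFun h (Sum.inl i)
    · simpa [matC3_mulVec_inr] using congrFun h (Sum.inr (⟨0, hn⟩, j))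
  · rintro ⟨htop, hblock⟩
    ext (i | ⟨k, j⟩)
    · simpa [matC3_mulVec_inl] using congrFun htop i
    · simpa [matC3_mulVec_inr] using congrFun hblock j

end

/-- If `(x, y, …, y)` (not zero) is an eigenvector of `C` with eigenvalue `λ`, then the
nonzero vector `(y, −x/n, …, −x/n)` is an eigenvector of `D` with eigenvalue `n − 1 − λ`. -/
theorem matC3_eigenvalue_implies_matD3 (p q n : ℕ) (hn : 1 ≤ n)
    (B : Matrix (Fin p) (Fin q) ℝ) (x : Fin p → ℝ) (y : Fin q → ℝ) (l : ℝ)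
    (hxy : ¬(x = 0 ∧ y = 0))
    (hev : matC3 p q n B *ᵥ Sum.elim x (fun kj => y kj.2) =
      l • Sum.elim x (fun kj => y kj.2)) :
    (Sum.elim y (fun ki => -x ki.2 / n) : Fin q ⊕ Fin n × Fin p → ℝ) ≠ 0 ∧
      matD3 p q n B *ᵥ Sum.elim y (fun ki => -x ki.2 / n) =
        ((n : ℝ) - 1 - l) • Sum.elim y (fun ki => -x ki.2 / n) := by
  have hn0 : (n : ℝ) ≠ 0 := by positivity
  obtain ⟨htop, hblock⟩ := (matC3_mulVec_eq_smul_iff B x y hn l).1 hev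
  refine ⟨fun h0 => hxy ⟨funext fun i => ?_, funext fun j => congrFun h0 (Sum.inl j)⟩, ?_⟩
  · simpa [hn0] using congrFun h0 (Sum.inr (⟨0, hn⟩, i))
  have hBx : Bᵀ *ᵥ x = (l - ((n : ℝ) - 1)) • y := by
    rw [sub_smul, ← hblock, add_sub_cancel_right]
  have hBy : B *ᵥ y = ((n : ℝ)⁻¹ * l) • x := by
    rw [mul_smul, ← htop, smul_smul, inv_mul_cancel₀ hn0, one_smul]
  have hw : (fun i => -x i / n) = (-(n : ℝ)⁻¹) • x := by
    ext i
    simp [div_eq_inv_mul]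
  rw [matD3_eq_matC3_transpose]
  refine (matC3_mulVec_eq_smul_iff Bᵀ y (fun i => -x i / n) hn _).2 ⟨?_, ?_⟩ <;> rw [hw]
  · rw [mulVec_smul, hBx, smul_smul, smul_smul]
    congr 1
    field_simp
    ring
  · rw [transpose_transpose, hBy, smul_smul, smul_smul, ← add_smul]
    congr 1
    ring
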